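/- arXiv:2401.15517 — 2 statements merged into one kernel-verified Lean document; each statement's English description precedes it below -/
import Mathlib

section
/- Let s ≥ 1, n ≥ 2s, γ ∈ ℝ. Let g⁺ ∈ ℂ^s have all entries nonzero, let θ⁺ ∈ ℂ^s have nonzero pairwise-distinct entries with (θ⁺_k)^n ≠ e^{−iγ} for all k. Let z_0,…,z_{2s−1} ∈ ℂ be pairwise distinct with z_j^n = e^{iγ}, and let z_{2s},…,z_{3s−1} ∈ ℂ be pairwise distinct with z_j^n ≠ e^{iγ} and v⁺(z_j) ≠ 0 for 2s ≤ j ≤ 3s−1. Set y_j = u⁺(z_j)/v⁺(z_j). If polynomials v, û, ũ ∈ ℂ[z] with deg v ≤ s, deg û ≤ s−1, deg ũ ≤ s−1 satisfy y_j·v(z_j) − z_j^n·û(z_j) − ũ(z_j) = 0 for all 0 ≤ j ≤ 3s−1, then there exists c ∈ ℂ such that v = c·v⁺, û = c·û⁺ and ũ = c·ũ⁺ identically. -/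
/-! Put `e := exp (iγ)`. On the `2s` samples with `z ^ n = e` the data satisfy
`y v⁺ = e û⁺ + ũ⁺` and `y v = e û + ũ`, so `(e û⁺ + ũ⁺) v - v⁺ (e û + ũ)`, of degree `< 2s`,
has `2s` zeros and vanishes. As `e θ_l ^ n ≠ 1`, the factor `e û⁺ + ũ⁺` does not vanish at the
roots `θ_l⁻¹` of `v⁺`; hence `v` does, `v = c v⁺`, and `e û + ũ = c (e û⁺ + ũ⁺)`. On the
remaining `s` samples `z ^ n ≠ e`, which separates the two parts: `(z ^ n - e) (û - c û⁺)`
vanishes there, so `û = c û⁺` by degree, and then `ũ = c ũ⁺`. -/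

open Polynomial Finset Complex

/-- `t_l(z) = ∏_{i ≠ l} (z·θ_i − 1)`. -/
noncomputable def tPoly (s : ℕ) (θ : Fin s → ℂ) (l : Fin s) : Polynomial ℂ :=
  ∏ i ∈ Finset.univ.erase l, (Polynomial.C (θ i) * Polynomial.X - 1)

/-- `û(z) = Σ_l g_l · θ_l^n · t_l(z)`. -/
noncomputable def uHat (s n : ℕ) (θ g : Fin s → ℂ) : Polynomial ℂ :=
  ∑ l : Fin s, Polynomial.C (g l * θ l ^ n) * tPoly s θ l

/-- `ũ(z) = −Σ_l g_l · t_l(z)`. -/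
noncomputable def uTilde (s : ℕ) (θ g : Fin s → ℂ) : Polynomial ℂ :=
  -∑ l : Fin s, Polynomial.C (g l) * tPoly s θ l

/-- `v(z) = ∏_l (z·θ_l − 1)`. -/
noncomputable def vPoly (s : ℕ) (θ : Fin s → ℂ) : Polynomial ℂ :=
  ∏ l : Fin s, (Polynomial.C (θ l) * Polynomial.X - 1)

/-- `u(z) = z^n·û(z) + ũ(z)`. -/
noncomputable def uPoly (s n : ℕ) (θ g : Fin s → ℂ) : Polynomial ℂ :=
  Polynomial.X ^ n * uHat s n θ g + uTilde s θ g

namespace Polynomial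

variable {K ι : Type*} [Field K] {r : ι → K} {S : Finset ι} {p q : K[X]}

theorem exists_eq_C_mul_of_eval_index_eq_zero (hr : Set.InjOn r S) (hq : q.degree = #S)
    (hp : p.degree ≤ #S) (hpr : ∀ i ∈ S, p.eval (r i) = 0) (hqr : ∀ i ∈ S, q.eval (r i) = 0) :
    ∃ c, p = C c * q := by
  have hq0 : q.coeff #S ≠ 0 := coeff_ne_zero_of_eq_degree hq
  refine ⟨p.coeff #S / q.coeff #S, eq_of_degree_sub_lt_of_eval_index_eq S hr ?_ fun i hi => ?_⟩
  · rw [degree_lt_iff_coeff_zero]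
    intro m hm
    rcases hm.eq_or_lt with rfl | hm
    · simp [div_mul_cancel₀ _ hq0]
    · have hm' : ((#S : ℕ) : WithBot ℕ) < m := by exact_mod_cast hm
      simp [coeff_eq_zero_of_degree_lt (hp.trans_lt hm'),
        coeff_eq_zero_of_degree_lt (hq.trans_lt hm')]
  · simp [hpr i hi, hqr i hi]

end Polynomial

/-- `u` with `z ^ n` specialised to the constant `e`. -/
noncomputable def uSpec (e : ℂ) (s n : ℕ) (θ g : Fin s → ℂ) : ℂ[X] :=
  C e * uHat s n θ g + uTilde s θ g

section

variable {s n : ℕ} {θ g : Fin s → ℂ} {e c : ℂ} {ι : Type*} {S : Finset ι} {z y : ι → ℂ}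
  {v uh ut : ℂ[X]}

theorem natDegree_tPoly_le (l : Fin s) : (tPoly s θ l).natDegree ≤ s - 1 := by
  refine (natDegree_prod_le _ _).trans ?_
  calc ∑ i ∈ univ.erase l, (C (θ i) * X - 1 : ℂ[X]).natDegree ≤ ∑ _i ∈ univ.erase l, 1 :=
        sum_le_sum fun i _ => by compute_degree
    _ = s - 1 := by simp [card_erase_of_mem]

theorem natDegree_uHat_le : (uHat s n θ g).natDegree ≤ s - 1 :=
  natDegree_sum_le_of_forall_le _ _ fun l _ => (natDegree_C_mul_le _ _).trans (natDegree_tPoly_le l)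

theorem natDegree_uTilde_le : (uTilde s θ g).natDegree ≤ s - 1 := by
  rw [uTilde, natDegree_neg]
  exact natDegree_sum_le_of_forall_le _ _ fun l _ =>
    (natDegree_C_mul_le _ _).trans (natDegree_tPoly_le l)

theorem natDegree_uSpec_le : (uSpec e s n θ g).natDegree ≤ s - 1 :=
  natDegree_add_le_of_degree_le ((natDegree_C_mul_le _ _).trans natDegree_uHat_le)
    natDegree_uTilde_le

theorem natDegree_vPoly_le : (vPoly s θ).natDegree ≤ s := by
  refine (natDegree_prod_le _ _).trans ?_
  calc ∑ l, (C (θ l) * X - 1 : ℂ[X]).natDegree ≤ ∑ _l : Fin s, 1 :=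
        sum_le_sum fun l _ => by compute_degree
    _ = s := by simp

theorem degree_vPoly (hθ : ∀ l, θ l ≠ 0) : (vPoly s θ).degree = s := by
  have hfactor : ∀ l, (C (θ l) * X - 1 : ℂ[X]).degree = 1 := fun l => by
    compute_degree!
    exact hθ l
  simp [vPoly, degree_prod, hfactor]

theorem vPoly_ne_zero (hθ : ∀ l, θ l ≠ 0) : vPoly s θ ≠ 0 := fun h => by
  simpa [h] using degree_vPoly hθ

theorem eval_vPoly_eq_zero_iff {x : ℂ} : (vPoly s θ).eval x = 0 ↔ ∃ l, θ l * x = 1 := by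
  simp [vPoly, eval_prod, prod_eq_zero_iff, sub_eq_zero]

theorem eval_vPoly_ne_zero_of_pow_eq (hres : ∀ l, e * θ l ^ n ≠ 1) {x : ℂ} (hx : x ^ n = e) :
    (vPoly s θ).eval x ≠ 0 := by
  rw [Ne, eval_vPoly_eq_zero_iff]
  rintro ⟨l, hl⟩
  exact hres l (by rw [← hx, ← mul_pow, mul_comm, hl, one_pow])

theorem eval_tPoly_inv_eq_zero {i l : Fin s} (hl : θ l ≠ 0) (hil : i ≠ l) :
    (tPoly s θ i).eval (θ l)⁻¹ = 0 := by
  simp only [tPoly, eval_prod, eval_sub, eval_mul, eval_C, eval_X, eval_one]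
  exact prod_eq_zero (mem_erase.mpr ⟨hil.symm, mem_univ l⟩) (by simp [hl])

theorem eval_tPoly_inv_ne_zero (hθ : Function.Injective θ) {l : Fin s} (hl : θ l ≠ 0) :
    (tPoly s θ l).eval (θ l)⁻¹ ≠ 0 := by
  simp only [tPoly, eval_prod, eval_sub, eval_mul, eval_C, eval_X, eval_one, prod_ne_zero_iff,
    mem_erase, sub_ne_zero]
  rintro i ⟨hil, -⟩ h
  exact hil (hθ (by rwa [mul_inv_eq_one₀ hl] at h))

theorem eval_uPoly_of_pow_eq {x : ℂ} (hx : x ^ n = e) :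
    (uPoly s n θ g).eval x = (uSpec e s n θ g).eval x := by
  simp [uPoly, uSpec, hx]

theorem eval_uSpec_inv {l : Fin s} (hl : θ l ≠ 0) :
    (uSpec e s n θ g).eval (θ l)⁻¹ = g l * (e * θ l ^ n - 1) * (tPoly s θ l).eval (θ l)⁻¹ := by
  have hsum : ∀ a : Fin s → ℂ, (∑ i, C (a i) * tPoly s θ i).eval (θ l)⁻¹
      = a l * (tPoly s θ l).eval (θ l)⁻¹ := fun a => by
    rw [eval_finsetSum, sum_eq_single l (fun i _ hil => by simp [eval_tPoly_inv_eq_zero hl hil])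
      (by simp)]
    simp
  simp only [uSpec, uHat, uTilde, eval_add, eval_mul, eval_C, eval_neg, hsum]
  ring


theorem uSpec_mul_eq_vPoly_mul (hs : 1 ≤ s) (hres : ∀ l, e * θ l ^ n ≠ 1)
    (hz : Set.InjOn z S) (hS : #S = 2 * s) (hzn : ∀ j ∈ S, z j ^ n = e)
    (hy : ∀ j ∈ S, y j = (uPoly s n θ g).eval (z j) / (vPoly s θ).eval (z j))
    (hv : v.natDegree ≤ s) (huh : uh.natDegree ≤ s - 1) (hut : ut.natDegree ≤ s - 1)
    (heq : ∀ j ∈ S, y j * v.eval (z j) - z j ^ n * uh.eval (z j) - ut.eval (z j) = 0) :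
    uSpec e s n θ g * v = vPoly s θ * (C e * uh + ut) := by
  have hdeg {p q : ℂ[X]} (hp : p.natDegree ≤ s - 1) (hq : q.natDegree ≤ s) :
      (p * q).degree < #S := by
    refine degree_le_natDegree.trans_lt ?_
    rw [hS]
    exact_mod_cast natDegree_mul_le.trans_lt (by omega)
  have hw : (C e * uh + ut).natDegree ≤ s - 1 :=
    natDegree_add_le_of_degree_le ((natDegree_C_mul_le _ _).trans huh) hut
  refine eq_of_degrees_lt_of_eval_index_eq S hz (hdeg natDegree_uSpec_le hv)
    (by rw [mul_comm]; exact hdeg hw natDegree_vPoly_le) fun j hj => ?_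
  have hvj := eval_vPoly_ne_zero_of_pow_eq hres (hzn j hj)
  have hyv : y j * (vPoly s θ).eval (z j) = (uSpec e s n θ g).eval (z j) := by
    rw [hy j hj, div_mul_cancel₀ _ hvj, eval_uPoly_of_pow_eq (hzn j hj)]
  have hyw : y j * v.eval (z j) = (C e * uh + ut).eval (z j) := by
    have hsample := heq j hj
    rw [hzn j hj] at hsample
    simp only [eval_add, eval_mul, eval_C]
    linear_combination hsample
  rw [eval_mul, eval_mul, ← hyv, ← hyw]
  ring

theorem exists_eq_C_mul_vPoly (hθ0 : ∀ l, θ l ≠ 0) (hθ : Function.Injective θ)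
    (hg : ∀ l, g l ≠ 0) (hres : ∀ l, e * θ l ^ n ≠ 1) {w : ℂ[X]} (hv : v.degree ≤ s)
    (hcross : uSpec e s n θ g * v = vPoly s θ * w) :
    ∃ c, v = C c * vPoly s θ := by
  have hroot (l : Fin s) : (vPoly s θ).eval (θ l)⁻¹ = 0 :=
    eval_vPoly_eq_zero_iff.mpr ⟨l, mul_inv_cancel₀ (hθ0 l)⟩
  refine exists_eq_C_mul_of_eval_index_eq_zero (r := fun l => (θ l)⁻¹) (S := univ)
    (inv_injective.comp hθ).injOn (by simpa using degree_vPoly hθ0) (by simpa using hv)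
    (fun l _ => ?_) fun l _ => hroot l
  have hu : (uSpec e s n θ g).eval (θ l)⁻¹ ≠ 0 := by
    rw [eval_uSpec_inv (hθ0 l)]
    exact mul_ne_zero (mul_ne_zero (hg l) (sub_ne_zero.mpr (hres l)))
      (eval_tPoly_inv_ne_zero hθ (hθ0 l))
  simpa [hroot l, hu] using congrArg (eval (θ l)⁻¹) hcross

theorem eq_C_mul_uHat_of_eval (hs : 1 ≤ s) (hz : Set.InjOn z S) (hS : #S = s)
    (hzn : ∀ j ∈ S, z j ^ n ≠ e) (hvz : ∀ j ∈ S, (vPoly s θ).eval (z j) ≠ 0)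
    (hy : ∀ j ∈ S, y j = (uPoly s n θ g).eval (z j) / (vPoly s θ).eval (z j))
    (huh : uh.natDegree ≤ s - 1) (hvc : v = C c * vPoly s θ)
    (hw : C e * uh + ut = C c * uSpec e s n θ g)
    (heq : ∀ j ∈ S, y j * v.eval (z j) - z j ^ n * uh.eval (z j) - ut.eval (z j) = 0) :
    uh = C c * uHat s n θ g := by
  rw [← sub_eq_zero]
  have hdeg : (uh - C c * uHat s n θ g).natDegree < #S := by
    have := natDegree_sub_le_of_le huh
      ((natDegree_C_mul_le c (uHat s n θ g)).trans natDegree_uHat_le)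
    omega
  refine eq_zero_of_degree_lt_of_eval_index_eq_zero S hz
    (degree_le_natDegree.trans_lt (by exact_mod_cast hdeg)) fun j hj => ?_
  have hyv : y j * v.eval (z j) = c * (uPoly s n θ g).eval (z j) := by
    rw [hy j hj, hvc, eval_mul, eval_C]
    field_simp [hvz j hj]
  have hwj := congrArg (eval (z j)) hw
  have hsample := heq j hj
  simp only [uPoly, uSpec, eval_add, eval_mul, eval_C, eval_pow, eval_X] at hyv hwj
  have : (z j ^ n - e) * (uh - C c * uHat s n θ g).eval (z j) = 0 := by
    simp only [eval_sub, eval_mul, eval_C]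
    linear_combination hyv - hsample - hwj
  exact (mul_eq_zero.mp this).resolve_left (sub_ne_zero.mpr (hzn j hj))

end

theorem three_s_samples_recovery_general (s n : ℕ) (hs : 1 ≤ s) (γ : ℝ)
    (gp θp : Fin s → ℂ)
    (hgp : ∀ l, gp l ≠ 0)
    (hθ0 : ∀ l, θp l ≠ 0) (hθinj : Function.Injective θp)
    (hθn : ∀ k, θp k ^ n ≠ Complex.exp (-(γ : ℂ) * Complex.I))
    (z : Fin (3 * s) → ℂ)
    (hzinj1 : ∀ j j' : Fin (3 * s), (j : ℕ) < 2 * s → (j' : ℕ) < 2 * s →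
      z j = z j' → j = j')
    (hzn1 : ∀ j : Fin (3 * s), (j : ℕ) < 2 * s →
      z j ^ n = Complex.exp ((γ : ℂ) * Complex.I))
    (hzinj2 : ∀ j j' : Fin (3 * s), 2 * s ≤ (j : ℕ) → 2 * s ≤ (j' : ℕ) →
      z j = z j' → j = j')
    (hzn2 : ∀ j : Fin (3 * s), 2 * s ≤ (j : ℕ) →
      z j ^ n ≠ Complex.exp ((γ : ℂ) * Complex.I))
    (hvz2 : ∀ j : Fin (3 * s), 2 * s ≤ (j : ℕ) → (vPoly s θp).eval (z j) ≠ 0)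
    (y : Fin (3 * s) → ℂ)
    (hy : ∀ j, y j = (uPoly s n θp gp).eval (z j) / (vPoly s θp).eval (z j))
    (v uh ut : Polynomial ℂ)
    (hv : v.degree ≤ (s : ℕ)) (huh : uh.degree ≤ ((s - 1 : ℕ) : ℕ))
    (hut : ut.degree ≤ ((s - 1 : ℕ) : ℕ))
    (heq : ∀ j, y j * v.eval (z j) - (z j) ^ n * uh.eval (z j) - ut.eval (z j) = 0) :
    ∃ c : ℂ, v = Polynomial.C c * vPoly s θp ∧
      uh = Polynomial.C c * uHat s n θp gp ∧
      ut = Polynomial.C c * uTilde s θp gp := by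
  set e := Complex.exp ((γ : ℂ) * Complex.I)
  have hres (l : Fin s) : e * θp l ^ n ≠ 1 := fun h =>
    hθn l (by rw [neg_mul, Complex.exp_neg, inv_eq_of_mul_eq_one_right h])
  let S₁ : Finset (Fin (3 * s)) := {j | (j : ℕ) < 2 * s}
  have hS₁ : #S₁ = 2 * s := by simp [S₁, Fin.card_filter_val_lt]
  have hS₂ : #S₁ᶜ = s := by rw [card_compl, Fintype.card_fin, hS₁]; omega
  have mem₁ {j} : j ∈ S₁ ↔ (j : ℕ) < 2 * s := by simp [S₁]
  have mem₂ {j} : j ∈ S₁ᶜ ↔ 2 * s ≤ (j : ℕ) := by simp [S₁]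
  have hcross := uSpec_mul_eq_vPoly_mul hs hres
    (fun j hj j' hj' => hzinj1 j j' (mem₁.mp hj) (mem₁.mp hj')) hS₁
    (fun j hj => hzn1 j (mem₁.mp hj)) (fun j _ => hy j) (natDegree_le_iff_degree_le.mpr hv)
    (natDegree_le_iff_degree_le.mpr huh) (natDegree_le_iff_degree_le.mpr hut) fun j _ => heq j
  obtain ⟨c, hvc⟩ := exists_eq_C_mul_vPoly hθ0 hθinj hgp hres hv hcross
  have hw : C e * uh + ut = C c * uSpec e s n θp gp :=
    mul_left_cancel₀ (vPoly_ne_zero hθ0) (by rw [← hcross, hvc]; ring)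
  have huhc := eq_C_mul_uHat_of_eval hs
    (fun j hj j' hj' => hzinj2 j j' (mem₂.mp hj) (mem₂.mp hj')) hS₂
    (fun j hj => hzn2 j (mem₂.mp hj)) (fun j hj => hvz2 j (mem₂.mp hj)) (fun j _ => hy j)
    (natDegree_le_iff_degree_le.mpr huh) hvc hw fun j _ => heq j
  refine ⟨c, hvc, huhc, ?_⟩
  rw [uSpec, huhc] at hw
  linear_combination hw

/-- Theorem `thm:almost_gen_samples`: with `2s` pairwise distinct
shifted-harmonic samples plus `s` further pairwise distinct samples with `z_j^n ≠ e^{iγ}`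
and `v⁺(z_j) ≠ 0`, any `v, û, ũ` of degrees `≤ s, ≤ s−1, ≤ s−1` satisfying
`y_j v(z_j) − z_j^n û(z_j) − ũ(z_j) = 0` for all `j` must equal `c·v⁺, c·û⁺, c·ũ⁺`. -/
theorem three_s_samples_recovery (s n : ℕ) (hs : 1 ≤ s) (hn : 2 * s ≤ n) (γ : ℝ)
    (gp θp : Fin s → ℂ)
    (hgp : ∀ l, gp l ≠ 0)
    (hθ0 : ∀ l, θp l ≠ 0) (hθinj : Function.Injective θp)
    (hθn : ∀ k, θp k ^ n ≠ Complex.exp (-(γ : ℂ) * Complex.I))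
    (z : Fin (3 * s) → ℂ)
    (hzinj1 : ∀ j j' : Fin (3 * s), (j : ℕ) < 2 * s → (j' : ℕ) < 2 * s →
      z j = z j' → j = j')
    (hzn1 : ∀ j : Fin (3 * s), (j : ℕ) < 2 * s →
      z j ^ n = Complex.exp ((γ : ℂ) * Complex.I))
    (hzinj2 : ∀ j j' : Fin (3 * s), 2 * s ≤ (j : ℕ) → 2 * s ≤ (j' : ℕ) →
      z j = z j' → j = j')
    (hzn2 : ∀ j : Fin (3 * s), 2 * s ≤ (j : ℕ) →
      z j ^ n ≠ Complex.exp ((γ : ℂ) * Complex.I))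
    (hvz2 : ∀ j : Fin (3 * s), 2 * s ≤ (j : ℕ) → (vPoly s θp).eval (z j) ≠ 0)
    (y : Fin (3 * s) → ℂ)
    (hy : ∀ j, y j = (uPoly s n θp gp).eval (z j) / (vPoly s θp).eval (z j))
    (v uh ut : Polynomial ℂ)
    (hv : v.degree ≤ (s : ℕ)) (huh : uh.degree ≤ ((s - 1 : ℕ) : ℕ))
    (hut : ut.degree ≤ ((s - 1 : ℕ) : ℕ))
    (heq : ∀ j, y j * v.eval (z j) - (z j) ^ n * uh.eval (z j) - ut.eval (z j) = 0) :
    ∃ c : ℂ, v = Polynomial.C c * vPoly s θp ∧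
      uh = Polynomial.C c * uHat s n θp gp ∧
      ut = Polynomial.C c * uTilde s θp gp :=
  three_s_samples_recovery_general s n hs γ gp θp hgp hθ0 hθinj hθn z hzinj1 hzn1 hzinj2 hzn2 hvz2 y
    hy v uh ut hv huh hut heq
end

section
/- Let s ≥ 1, n ≥ 1, let θ ∈ 𝕋^s have pairwise distinct entries and let g ∈ ℂ^s. Then for every 0 ≤ k ≤ s−1, the Laurent polynomial L = û·û* + ũ·ũ* satisfies L(conj(θ_k)) = 2·|g_k|²·|t_k(conj(θ_k))|². Consequently, knowledge of θ and of c·L for an unknown real constant c > 0 determines the magnitudes |g_k| up to a common positive real scalar. -/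
open Polynomial Finset Complex

/-!
At `w = conj θ_k = θ_k⁻¹` every `t_l` with `l ≠ k` contains the vanishing factor `w θ_k − 1`, so
`û(w) = g_k θ_k^n t_k(w)` and `ũ(w) = −g_k t_k(w)`; as `|θ_k| = 1`, both have squared modulus
`|g_k|² |t_k(w)|²`.
-/

section Interpolation

variable {s : ℕ} {θ : Fin s → ℂ} {k : Fin s} {w : ℂ}

theorem tPoly_eval_eq_zero_of_mul_eq_one (hw : θ k * w = 1) {l : Fin s} (hl : l ≠ k) :
    (tPoly s θ l).eval w = 0 := by
  rw [tPoly, eval_prod]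
  exact prod_eq_zero (mem_erase.mpr ⟨hl.symm, mem_univ k⟩) (by simp [hw])

theorem eval_sum_C_mul_tPoly_of_mul_eq_one (hw : θ k * w = 1) (c : Fin s → ℂ) :
    (∑ l, C (c l) * tPoly s θ l).eval w = c k * (tPoly s θ k).eval w := by
  rw [eval_finsetSum, sum_eq_single k]
  · simp
  · intro l _ hl
    simp [tPoly_eval_eq_zero_of_mul_eq_one hw hl]
  · simp

theorem uHat_eval_of_mul_eq_one (hw : θ k * w = 1) (n : ℕ) (g : Fin s → ℂ) :
    (uHat s n θ g).eval w = g k * θ k ^ n * (tPoly s θ k).eval w :=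
  eval_sum_C_mul_tPoly_of_mul_eq_one hw _

theorem uTilde_eval_of_mul_eq_one (hw : θ k * w = 1) (g : Fin s → ℂ) :
    (uTilde s θ g).eval w = -(g k * (tPoly s θ k).eval w) := by
  rw [uTilde, eval_neg, eval_sum_C_mul_tPoly_of_mul_eq_one hw]

end Interpolation

theorem L_at_conj_theta_general (s n : ℕ)
    (θ : Fin s → ℂ) (hθT : ∀ l, ‖θ l‖ = 1)
    (g : Fin s → ℂ) :
    ∀ k : Fin s,
      (uHat s n θ g).eval ((starRingEnd ℂ) (θ k)) *
          (starRingEnd ℂ) ((uHat s n θ g).eval ((starRingEnd ℂ) (θ k)))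
        + (uTilde s θ g).eval ((starRingEnd ℂ) (θ k)) *
          (starRingEnd ℂ) ((uTilde s θ g).eval ((starRingEnd ℂ) (θ k))) =
      ((2 * Complex.normSq (g k) *
          Complex.normSq ((tPoly s θ k).eval ((starRingEnd ℂ) (θ k))) : ℝ) : ℂ) := by
  intro k
  have hnormSq : normSq (θ k) = 1 := by rw [normSq_eq_norm_sq, hθT k, one_pow]
  have hw : θ k * (starRingEnd ℂ) (θ k) = 1 := by rw [mul_conj, hnormSq, ofReal_one]
  rw [uHat_eval_of_mul_eq_one hw, uTilde_eval_of_mul_eq_one hw, mul_conj, mul_conj,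
    normSq_neg, normSq_mul, normSq_mul, normSq_mul, map_pow, hnormSq, one_pow]
  push_cast
  ring

/-- cf. Proposition `prop:unique_g_abs_8s`: for each `k`, the Laurent
polynomial `L = û·û* + ũ·ũ*` (here evaluated on `𝕋`, where
`L(w) = û(w)conj(û(w)) + ũ(w)conj(ũ(w))`) satisfies
`L(conj θ_k) = 2·|g_k|²·|t_k(conj θ_k)|²`. -/
theorem L_at_conj_theta (s n : ℕ) (hs : 1 ≤ s) (hn : 1 ≤ n)
    (θ : Fin s → ℂ) (hθT : ∀ l, ‖θ l‖ = 1) (hθinj : Function.Injective θ)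
    (g : Fin s → ℂ) :
    ∀ k : Fin s,
      (uHat s n θ g).eval ((starRingEnd ℂ) (θ k)) *
          (starRingEnd ℂ) ((uHat s n θ g).eval ((starRingEnd ℂ) (θ k)))
        + (uTilde s θ g).eval ((starRingEnd ℂ) (θ k)) *
          (starRingEnd ℂ) ((uTilde s θ g).eval ((starRingEnd ℂ) (θ k))) =
      ((2 * Complex.normSq (g k) *
          Complex.normSq ((tPoly s θ k).eval ((starRingEnd ℂ) (θ k))) : ℝ) : ℂ) :=
  L_at_conj_theta_general s n θ hθT g
end
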